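/- arXiv:1910.05027 — 5 statements merged into one kernel-verified Lean document; each statement's English description precedes it below -/
import Mathlib

section
/- Let (A,d_A), (H,d_H) be chain complexes with chain maps i : H → A, p : A → H satisfying p∘i = id_H, and a degree +1 map h : A → A with i∘p − id_A = d_A∘h + h∘d_A. Then there exists a degree +1 map h' : A → A such that i∘p − id_A = d_A∘h' + h'∘d_A and moreover h'∘i = 0, p∘h' = 0, and h'∘h' = 0. (One may take h' = h''∘d_A∘h'' where h'' = (id−i∘p)∘h∘(id−i∘p).) -/
open CategoryTheory

/-- Given chain maps `i`, `p` with `p ∘ i = id` and a homotopy `h` between `i ∘ p` and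
`id_A`, the homotopy can be modified to a homotopy `h'` which in addition satisfies the
side conditions `h' ∘ i = 0`, `p ∘ h' = 0` and `h' ∘ h' = 0`. Degree `+1` maps are encoded
as families `A.X m ⟶ A.X n` vanishing unless `n = m + 1`. -/
theorem contraction_side_conditions_exist {R : Type} [CommRing R]
    (A H : ChainComplex (ModuleCat R) ℤ)
    (i : H ⟶ A) (p : A ⟶ H)
    (h : ∀ m n : ℤ, A.X m ⟶ A.X n)
    (hdeg : ∀ m n : ℤ, n ≠ m + 1 → h m n = 0)
    (hpi : i ≫ p = 𝟙 H)
    (hhtp : ∀ n : ℤ, p.f n ≫ i.f n - 𝟙 (A.X n)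
        = h n (n + 1) ≫ A.d (n + 1) n + A.d n (n - 1) ≫ h (n - 1) n) :
    ∃ h' : ∀ m n : ℤ, A.X m ⟶ A.X n,
      (∀ m n : ℤ, n ≠ m + 1 → h' m n = 0) ∧
      (∀ n : ℤ, p.f n ≫ i.f n - 𝟙 (A.X n)
          = h' n (n + 1) ≫ A.d (n + 1) n + A.d n (n - 1) ≫ h' (n - 1) n) ∧
      (∀ n : ℤ, i.f n ≫ h' n (n + 1) = 0) ∧
      (∀ n : ℤ, h' n (n + 1) ≫ p.f (n + 1) = 0) ∧
      (∀ n : ℤ, h' n (n + 1) ≫ h' (n + 1) (n + 2) = 0) := by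
  have hip : ∀ n : ℤ, i.f n ≫ p.f n = 𝟙 (H.X n) := by
    intro n
    rw [← HomologicalComplex.comp_f, hpi]
    rfl
  set q : ∀ n : ℤ, A.X n ⟶ A.X n := fun n => 𝟙 (A.X n) - p.f n ≫ i.f n with hqdef
  have hee : ∀ n : ℤ, (p.f n ≫ i.f n) ≫ (p.f n ≫ i.f n) = p.f n ≫ i.f n := by
    intro n
    rw [Category.assoc, ← Category.assoc (i.f n) (p.f n) (i.f n), hip, Category.id_comp]
  have hiq : ∀ n, i.f n ≫ q n = 0 := by
    intro n
    simp only [hqdef, Preadditive.comp_sub, Category.comp_id]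
    rw [← Category.assoc, hip, Category.id_comp, sub_self]
  have hqp : ∀ n, q n ≫ p.f n = 0 := by
    intro n
    simp only [hqdef, Preadditive.sub_comp, Category.id_comp]
    rw [Category.assoc, hip, Category.comp_id, sub_self]
  have hqq : ∀ n, q n ≫ q n = q n := by
    intro n
    simp only [hqdef, Preadditive.sub_comp, Preadditive.comp_sub, Category.id_comp,
      Category.comp_id, hee]
    abel
  have hqd : ∀ n m : ℤ, q n ≫ A.d n m = A.d n m ≫ q m := by
    intro n m
    simp only [hqdef, Preadditive.sub_comp, Preadditive.comp_sub, Category.id_comp,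
      Category.comp_id]
    rw [Category.assoc, i.comm n m, ← Category.assoc, p.comm n m, Category.assoc]
  set h1 : ∀ m n : ℤ, A.X m ⟶ A.X n := fun m n => q m ≫ h m n ≫ q n with h1def
  have qh1 : ∀ m n, q m ≫ h1 m n = h1 m n := by
    intro m n
    simp only [h1def]
    rw [← Category.assoc, hqq]
  have h1q : ∀ m n, h1 m n ≫ q n = h1 m n := by
    intro m n
    simp only [h1def, Category.assoc, hqq]
  have ih1 : ∀ m n, i.f m ≫ h1 m n = 0 := by
    intro m n
    simp only [h1def]
    rw [← Category.assoc, hiq]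
    simp
  have h1p : ∀ m n, h1 m n ≫ p.f n = 0 := by
    intro m n
    simp only [h1def, Category.assoc, hqp]
    simp
  set K : ∀ n : ℤ, A.X n ⟶ A.X n := fun n => h1 n (n+1) ≫ A.d (n+1) n with hKdef
  set L : ∀ n : ℤ, A.X n ⟶ A.X n := fun n => A.d n (n-1) ≫ h1 (n-1) n with hLdef
  have hKL : ∀ n, K n + L n = -(q n) := by
    intro n
    have e1 : K n = q n ≫ ((h n (n+1) ≫ A.d (n+1) n) ≫ q n) := by
      simp only [hKdef, h1def, Category.assoc]
      rw [hqd]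
    have e2 : L n = q n ≫ ((A.d n (n-1) ≫ h (n-1) n) ≫ q n) := by
      simp only [hLdef, h1def]
      conv_lhs => rw [← Category.assoc, ← hqd]
      simp only [Category.assoc]
    rw [e1, e2, ← Preadditive.comp_add, ← Preadditive.add_comp, ← hhtp n]
    have hmq : p.f n ≫ i.f n - 𝟙 (A.X n) = -(q n) := by
      simp only [hqdef]; abel
    rw [hmq, Preadditive.neg_comp, hqq, Preadditive.comp_neg, hqq]
  have hqK : ∀ n, q n ≫ K n = K n := by
    intro n
    simp only [hKdef]
    rw [← Category.assoc, qh1]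
  have hKq : ∀ n, K n ≫ q n = K n := by
    intro n
    simp only [hKdef, Category.assoc]
    rw [← hqd, ← Category.assoc, h1q]
  have hqL : ∀ n, q n ≫ L n = L n := by
    intro n
    simp only [hLdef]
    rw [← Category.assoc, hqd, Category.assoc, qh1]
  have hKLz : ∀ n, K n ≫ L n = 0 := by
    intro n
    simp only [hKdef, hLdef, Category.assoc]
    rw [← Category.assoc (A.d (n+1) n), HomologicalComplex.d_comp_d]
    simp
  have hKK : ∀ n, K n ≫ K n = -(K n) := by
    intro n
    have e : K n ≫ K n = K n ≫ (-(q n) - L n) := by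
      congr 1
      rw [← hKL n]; abel
    rw [e, Preadditive.comp_sub, Preadditive.comp_neg, hKq, hKLz, sub_zero]
  have hLL : ∀ n, L n ≫ L n = -(L n) := by
    intro n
    have e : L n ≫ L n = (-(q n) - K n) ≫ L n := by
      congr 1
      rw [← hKL n]; abel
    rw [e, Preadditive.sub_comp, Preadditive.neg_comp, hqL, hKLz, sub_zero]
  have hLK : ∀ n, L n ≫ K n = 0 := by
    intro n
    have e : L n ≫ K n = (-(q n) - K n) ≫ K n := by
      congr 1
      rw [← hKL n]; abel
    rw [e, Preadditive.sub_comp, Preadditive.neg_comp, hqK, hKK]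
    abel
  refine ⟨fun m n => -(h1 m n ≫ A.d n m ≫ h1 m n), ?_, ?_, ?_, ?_, ?_⟩
  · intro m n hmn
    simp [h1def, hdeg m n hmn]
  · intro n
    have hKK' := hKK n
    have hLL' := hLL n
    have hKL' := hKL n
    simp only [hKdef, hLdef] at hKK' hLL'
    simp only [hKdef, hLdef, hqdef] at hKL'
    have t1 : (-(h1 n (n+1) ≫ A.d (n+1) n ≫ h1 n (n+1))) ≫ A.d (n+1) n
        = h1 n (n+1) ≫ A.d (n+1) n := by
      calc (-(h1 n (n+1) ≫ A.d (n+1) n ≫ h1 n (n+1))) ≫ A.d (n+1) n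
          = -((h1 n (n+1) ≫ A.d (n+1) n) ≫ (h1 n (n+1) ≫ A.d (n+1) n)) := by
            simp only [Preadditive.neg_comp, Category.assoc]
        _ = h1 n (n+1) ≫ A.d (n+1) n := by rw [hKK']; exact neg_neg _
    have t2 : A.d n (n-1) ≫ (-(h1 (n-1) n ≫ A.d n (n-1) ≫ h1 (n-1) n))
        = A.d n (n-1) ≫ h1 (n-1) n := by
      calc A.d n (n-1) ≫ (-(h1 (n-1) n ≫ A.d n (n-1) ≫ h1 (n-1) n))
          = -((A.d n (n-1) ≫ h1 (n-1) n) ≫ (A.d n (n-1) ≫ h1 (n-1) n)) := by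
            simp only [Preadditive.comp_neg, Category.assoc]
        _ = A.d n (n-1) ≫ h1 (n-1) n := by rw [hLL']; exact neg_neg _
    rw [t1, t2, hKL']
    abel
  · intro n
    rw [Preadditive.comp_neg, ← Category.assoc, ih1]
    simp
  · intro n
    simp only [Preadditive.neg_comp, Category.assoc, h1p]
    simp
  · intro n
    have hLK' := hLK (n+1)
    simp only [hKdef, hLdef] at hLK'
    have e11 : (n : ℤ) + 1 - 1 = n := by ring
    rw [e11] at hLK'
    have hn : (n : ℤ) + 2 = n + 1 + 1 := by ring
    rw [hn]
    calc (-(h1 n (n+1) ≫ A.d (n+1) n ≫ h1 n (n+1)))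
          ≫ (-(h1 (n+1) (n+1+1) ≫ A.d (n+1+1) (n+1) ≫ h1 (n+1) (n+1+1)))
        = h1 n (n+1) ≫ ((A.d (n+1) n ≫ h1 n (n+1))
            ≫ (h1 (n+1) (n+1+1) ≫ A.d (n+1+1) (n+1))) ≫ h1 (n+1) (n+1+1) := by
          simp only [Preadditive.neg_comp, Preadditive.comp_neg, neg_neg, Category.assoc]
      _ = 0 := by rw [hLK']; simp
end

section
/- Let (A,d_A), (H,d_H), i, p, h be a contraction with π := i∘p, over a commutative ring in which 2 is invertible. Define the symmetric homotopy h₂ : A⊗A → A⊗A (degree +1, with Koszul sign conventions for tensor products of graded maps) by h₂ := (1/2)(h⊗π + id⊗h + π⊗h + h⊗id). Then d_{A⊗A}∘h₂ + h₂∘d_{A⊗A} = π⊗π − id⊗id, where d_{A⊗A} = d_A⊗id + id⊗d_A (with Koszul signs). -/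
open TensorProduct

section Aux
variable {R M N P Q : Type} [CommRing R]
  [AddCommGroup M] [Module R M] [AddCommGroup N] [Module R N]
  [AddCommGroup P] [Module R P] [AddCommGroup Q] [Module R Q]

lemma tpmap_sub_left (f₁ f₂ : M →ₗ[R] P) (g : N →ₗ[R] Q) :
    TensorProduct.map (f₁ - f₂) g = TensorProduct.map f₁ g - TensorProduct.map f₂ g := by
  apply TensorProduct.ext'
  intro x y
  simp [sub_tmul]

lemma tpmap_sub_right (f : M →ₗ[R] P) (g₁ g₂ : N →ₗ[R] Q) :
    TensorProduct.map f (g₁ - g₂) = TensorProduct.map f g₁ - TensorProduct.map f g₂ := by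
  apply TensorProduct.ext'
  intro x y
  simp [tmul_sub]

lemma tpmap_neg_left (f : M →ₗ[R] P) (g : N →ₗ[R] Q) :
    TensorProduct.map (-f) g = -TensorProduct.map f g := by
  apply TensorProduct.ext'
  intro x y
  simp [neg_tmul]

lemma tpmap_neg_right (f : M →ₗ[R] P) (g : N →ₗ[R] Q) :
    TensorProduct.map f (-g) = -TensorProduct.map f g := by
  apply TensorProduct.ext'
  intro x y
  simp [tmul_neg]

end Aux

/-- For a contraction of chain complexes (with all side conditions), the symmetric homotopy
`h₂ := (1/2)(h⊗π + id⊗h + π⊗h + h⊗id)` (with Koszul signs) satisfies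
`d₂ ∘ h₂ + h₂ ∘ d₂ = π⊗π - id⊗id` on `A ⊗ A`, where `d₂ = d⊗id + id⊗d`.

The grading is encoded by sign operators `εA, εH` (`ε x = (-1)^{|x|} x`): even maps
commute with `ε`, odd (degree `±1`) maps anticommute with it, and the Koszul sign rule
`(f ⊗ g)(x ⊗ y) = (-1)^{|g||x|} f x ⊗ g y` makes `id⊗h` into `TensorProduct.map εA h`,
`π⊗h` into `TensorProduct.map (π ∘ εA) h`, and `d₂` into
`TensorProduct.map dA id + TensorProduct.map εA dA`. -/
theorem contraction_symmetric_homotopy {R A H : Type} [CommRing R] [Invertible (2 : R)]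
    [AddCommGroup A] [Module R A] [AddCommGroup H] [Module R H]
    (dA : A →ₗ[R] A) (dH : H →ₗ[R] H) (εA : A →ₗ[R] A) (εH : H →ₗ[R] H)
    (i : H →ₗ[R] A) (p : A →ₗ[R] H) (h : A →ₗ[R] A)
    (hεA : εA ∘ₗ εA = LinearMap.id) (hεH : εH ∘ₗ εH = LinearMap.id)
    (hdA2 : dA ∘ₗ dA = 0) (hdH2 : dH ∘ₗ dH = 0)
    (hdAodd : εA ∘ₗ dA = -(dA ∘ₗ εA)) (hdHodd : εH ∘ₗ dH = -(dH ∘ₗ εH))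
    (hhodd : εA ∘ₗ h = -(h ∘ₗ εA))
    (hieven : εA ∘ₗ i = i ∘ₗ εH) (hpeven : εH ∘ₗ p = p ∘ₗ εA)
    (hichain : dA ∘ₗ i = i ∘ₗ dH) (hpchain : dH ∘ₗ p = p ∘ₗ dA)
    (hpi : p ∘ₗ i = LinearMap.id)
    (hhtp : i ∘ₗ p - LinearMap.id = dA ∘ₗ h + h ∘ₗ dA)
    (hhi : h ∘ₗ i = 0) (hph : p ∘ₗ h = 0) (hhh : h ∘ₗ h = 0) :
    let π : A →ₗ[R] A := i ∘ₗ p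
    let h₂ : A ⊗[R] A →ₗ[R] A ⊗[R] A :=
      (⅟(2 : R)) • (TensorProduct.map h π + TensorProduct.map εA h
        + TensorProduct.map (π ∘ₗ εA) h + TensorProduct.map h LinearMap.id)
    let d₂ : A ⊗[R] A →ₗ[R] A ⊗[R] A :=
      TensorProduct.map dA LinearMap.id + TensorProduct.map εA dA
    d₂ ∘ₗ h₂ + h₂ ∘ₗ d₂
      = TensorProduct.map π π - TensorProduct.map LinearMap.id LinearMap.id := by
  intro π h₂ d₂
  have hA : LinearMap.comp εA (LinearMap.comp (i ∘ₗ p) εA) = i ∘ₗ p := by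
    have hεπ : εA ∘ₗ (i ∘ₗ p) = (i ∘ₗ p) ∘ₗ εA := by
      rw [← LinearMap.comp_assoc, hieven, LinearMap.comp_assoc, hpeven, ← LinearMap.comp_assoc]
    rw [← LinearMap.comp_assoc, hεπ, LinearMap.comp_assoc, hεA, LinearMap.comp_id]
  have hB : LinearMap.comp (LinearMap.comp (i ∘ₗ p) εA) εA = i ∘ₗ p := by
    rw [LinearMap.comp_assoc, hεA, LinearMap.comp_id]
  have hπd : dA ∘ₗ (i ∘ₗ p) = (i ∘ₗ p) ∘ₗ dA := by
    rw [← LinearMap.comp_assoc, hichain, LinearMap.comp_assoc, hpchain, ← LinearMap.comp_assoc]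
  have hdε : dA ∘ₗ εA = -(εA ∘ₗ dA) := by rw [hdAodd, neg_neg]
  have hanti3 : dA ∘ₗ ((i ∘ₗ p) ∘ₗ εA) = -(((i ∘ₗ p) ∘ₗ εA) ∘ₗ dA) := by
    rw [← LinearMap.comp_assoc, hπd, LinearMap.comp_assoc, hdε, LinearMap.comp_neg,
      ← LinearMap.comp_assoc]
  have hdh : dA ∘ₗ h = (i ∘ₗ p) - LinearMap.id - h ∘ₗ dA := by
    rw [eq_sub_iff_add_eq]; exact hhtp.symm
  show (TensorProduct.map dA LinearMap.id + TensorProduct.map εA dA) ∘ₗ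
      ((⅟(2 : R)) • (TensorProduct.map h (i ∘ₗ p) + TensorProduct.map εA h
        + TensorProduct.map ((i ∘ₗ p) ∘ₗ εA) h + TensorProduct.map h LinearMap.id))
    + ((⅟(2 : R)) • (TensorProduct.map h (i ∘ₗ p) + TensorProduct.map εA h
        + TensorProduct.map ((i ∘ₗ p) ∘ₗ εA) h + TensorProduct.map h LinearMap.id)) ∘ₗ
      (TensorProduct.map dA LinearMap.id + TensorProduct.map εA dA)
    = TensorProduct.map (i ∘ₗ p) (i ∘ₗ p) - TensorProduct.map LinearMap.id LinearMap.id
  rw [LinearMap.comp_smul, LinearMap.smul_comp, ← smul_add,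
    show TensorProduct.map (i ∘ₗ p) (i ∘ₗ p)
        - TensorProduct.map (LinearMap.id : A →ₗ[R] A) (LinearMap.id : A →ₗ[R] A)
      = (⅟(2 : R)) • ((2 : R) • (TensorProduct.map (i ∘ₗ p) (i ∘ₗ p)
        - TensorProduct.map LinearMap.id LinearMap.id)) from (invOf_smul_smul _ _).symm]
  congr 1
  simp only [LinearMap.add_comp, LinearMap.comp_add, ← TensorProduct.map_comp,
    LinearMap.id_comp, LinearMap.comp_id]
  simp only [hdh, hA, hB, hπd, hhodd, hdAodd, hanti3, tpmap_sub_left, tpmap_sub_right,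
    tpmap_neg_left, tpmap_neg_right]
  simp only [hεA]
  rw [two_smul]
  abel
end

section
/- With the data and notation of a contraction with all side conditions, and h₂ := (1/2)(h⊗π + id⊗h + π⊗h + h⊗id) on A⊗A (Koszul sign conventions), one has h⊗h = (h⊗id)∘h₂ + h₂∘(id⊗h) as maps A⊗A → A⊗A. -/
open TensorProduct

/-- Side relation (b) for the symmetric homotopy: `h⊗h = (h⊗id) ∘ h₂ + h₂ ∘ (id⊗h)` as maps
`A⊗A → A⊗A` (with Koszul signs, `h⊗h = TensorProduct.map (h ∘ εA) h` and
`id⊗h = TensorProduct.map εA h`).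

The grading is encoded by sign operators `εA, εH` (`ε x = (-1)^{|x|} x`): even maps
commute with `ε`, odd (degree `±1`) maps anticommute with it, and the Koszul sign rule
`(f ⊗ g)(x ⊗ y) = (-1)^{|g||x|} f x ⊗ g y` makes `id⊗h` into `TensorProduct.map εA h`
and `π⊗h` into `TensorProduct.map (π ∘ εA) h`. -/
theorem contraction_symmetric_homotopy_7 {R A H : Type} [CommRing R] [Invertible (2 : R)]
    [AddCommGroup A] [Module R A] [AddCommGroup H] [Module R H]
    (dA : A →ₗ[R] A) (dH : H →ₗ[R] H) (εA : A →ₗ[R] A) (εH : H →ₗ[R] H)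
    (i : H →ₗ[R] A) (p : A →ₗ[R] H) (h : A →ₗ[R] A)
    (hεA : εA ∘ₗ εA = LinearMap.id) (hεH : εH ∘ₗ εH = LinearMap.id)
    (hdA2 : dA ∘ₗ dA = 0) (hdH2 : dH ∘ₗ dH = 0)
    (hdAodd : εA ∘ₗ dA = -(dA ∘ₗ εA)) (hdHodd : εH ∘ₗ dH = -(dH ∘ₗ εH))
    (hhodd : εA ∘ₗ h = -(h ∘ₗ εA))
    (hieven : εA ∘ₗ i = i ∘ₗ εH) (hpeven : εH ∘ₗ p = p ∘ₗ εA)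
    (hichain : dA ∘ₗ i = i ∘ₗ dH) (hpchain : dH ∘ₗ p = p ∘ₗ dA)
    (hpi : p ∘ₗ i = LinearMap.id)
    (hhtp : i ∘ₗ p - LinearMap.id = dA ∘ₗ h + h ∘ₗ dA)
    (hhi : h ∘ₗ i = 0) (hph : p ∘ₗ h = 0) (hhh : h ∘ₗ h = 0) :
    let π : A →ₗ[R] A := i ∘ₗ p
    let h₂ : A ⊗[R] A →ₗ[R] A ⊗[R] A :=
      (⅟(2 : R)) • (TensorProduct.map h π + TensorProduct.map εA h
        + TensorProduct.map (π ∘ₗ εA) h + TensorProduct.map h LinearMap.id)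
    TensorProduct.map (h ∘ₗ εA) h
      = TensorProduct.map h LinearMap.id ∘ₗ h₂ + h₂ ∘ₗ TensorProduct.map εA h := by
  intro π h₂
  have hπh : π ∘ₗ h = 0 := by
    show (i ∘ₗ p) ∘ₗ h = 0
    rw [LinearMap.comp_assoc, hph, LinearMap.comp_zero]
  have hhπ : h ∘ₗ π = 0 := by
    show h ∘ₗ i ∘ₗ p = 0
    rw [← LinearMap.comp_assoc, hhi, LinearMap.zero_comp]
  have e1 : TensorProduct.map h LinearMap.id ∘ₗ h₂
      = (⅟(2 : R)) • TensorProduct.map (h ∘ₗ εA) h := by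
    show TensorProduct.map h LinearMap.id ∘ₗ ((⅟(2 : R)) • _) = _
    rw [LinearMap.comp_smul]
    congr 1
    simp only [LinearMap.comp_add, ← TensorProduct.map_comp, hhh, hhπ,
      LinearMap.id_comp, LinearMap.comp_id, ← LinearMap.comp_assoc, TensorProduct.map_zero_left, TensorProduct.map_zero_right, LinearMap.zero_comp]
    abel
  have e2 : h₂ ∘ₗ TensorProduct.map εA h
      = (⅟(2 : R)) • TensorProduct.map (h ∘ₗ εA) h := by
    show ((⅟(2 : R)) • _) ∘ₗ TensorProduct.map εA h = _
    rw [LinearMap.smul_comp]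
    congr 1
    simp only [LinearMap.add_comp, ← TensorProduct.map_comp, hhh, hπh, hεA,
      LinearMap.id_comp, LinearMap.comp_id, LinearMap.comp_assoc, hεA,
      TensorProduct.map_zero_left, TensorProduct.map_zero_right, LinearMap.zero_comp, LinearMap.comp_zero]
    abel
  rw [e1, e2, ← add_smul, invOf_two_add_invOf_two, one_smul]
end

section
/- With the data and notation of a contraction with all side conditions, and h₂ := (1/2)(h⊗π + id⊗h + π⊗h + h⊗id) on A⊗A (Koszul sign conventions), one has (h⊗id)∘h₂ = −h₂∘(h⊗id). -/
open TensorProduct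

/-- Side relation (c) for the symmetric homotopy: `(h⊗id) ∘ h₂ = -h₂ ∘ (h⊗id)`.

The grading is encoded by sign operators `εA, εH` (`ε x = (-1)^{|x|} x`): even maps
commute with `ε`, odd (degree `±1`) maps anticommute with it, and the Koszul sign rule
`(f ⊗ g)(x ⊗ y) = (-1)^{|g||x|} f x ⊗ g y` makes `id⊗h` into `TensorProduct.map εA h`
and `π⊗h` into `TensorProduct.map (π ∘ εA) h`. -/
theorem contraction_symmetric_homotopy_8 {R A H : Type} [CommRing R] [Invertible (2 : R)]
    [AddCommGroup A] [Module R A] [AddCommGroup H] [Module R H]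
    (dA : A →ₗ[R] A) (dH : H →ₗ[R] H) (εA : A →ₗ[R] A) (εH : H →ₗ[R] H)
    (i : H →ₗ[R] A) (p : A →ₗ[R] H) (h : A →ₗ[R] A)
    (hεA : εA ∘ₗ εA = LinearMap.id) (hεH : εH ∘ₗ εH = LinearMap.id)
    (hdA2 : dA ∘ₗ dA = 0) (hdH2 : dH ∘ₗ dH = 0)
    (hdAodd : εA ∘ₗ dA = -(dA ∘ₗ εA)) (hdHodd : εH ∘ₗ dH = -(dH ∘ₗ εH))
    (hhodd : εA ∘ₗ h = -(h ∘ₗ εA))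
    (hieven : εA ∘ₗ i = i ∘ₗ εH) (hpeven : εH ∘ₗ p = p ∘ₗ εA)
    (hichain : dA ∘ₗ i = i ∘ₗ dH) (hpchain : dH ∘ₗ p = p ∘ₗ dA)
    (hpi : p ∘ₗ i = LinearMap.id)
    (hhtp : i ∘ₗ p - LinearMap.id = dA ∘ₗ h + h ∘ₗ dA)
    (hhi : h ∘ₗ i = 0) (hph : p ∘ₗ h = 0) (hhh : h ∘ₗ h = 0) :
    let π : A →ₗ[R] A := i ∘ₗ p
    let h₂ : A ⊗[R] A →ₗ[R] A ⊗[R] A :=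
      (⅟(2 : R)) • (TensorProduct.map h π + TensorProduct.map εA h
        + TensorProduct.map (π ∘ₗ εA) h + TensorProduct.map h LinearMap.id)
    TensorProduct.map h LinearMap.id ∘ₗ h₂ = -(h₂ ∘ₗ TensorProduct.map h LinearMap.id) := by
  intro π h₂
  have hhx : ∀ x, h (h x) = 0 := fun x => congrFun (congrArg DFunLike.coe hhh) x
  have hhix : ∀ x, h (i x) = 0 := fun x => congrFun (congrArg DFunLike.coe hhi) x
  have hphx : ∀ x, p (h x) = 0 := fun x => congrFun (congrArg DFunLike.coe hph) x
  have hεhx : ∀ x, εA (h x) = -(h (εA x)) := fun x => congrFun (congrArg DFunLike.coe hhodd) x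
  have hpεx : ∀ x, εH (p x) = p (εA x) := fun x => congrFun (congrArg DFunLike.coe hpeven) x
  apply TensorProduct.ext'
  intro x y
  simp only [h₂, π, LinearMap.comp_apply, LinearMap.neg_apply, LinearMap.smul_apply,
    LinearMap.add_apply, TensorProduct.map_tmul, LinearMap.id_coe, id_eq,
    map_add, map_smul, hhx, hhix, hphx, hεhx, zero_tmul, tmul_zero, map_zero]
  have : p (εA (h x)) = 0 := by rw [← hpεx, hphx, map_zero]
  simp [this, hεhx, hphx, smul_add, neg_tmul, smul_neg]
end

section
/- Let (A, d_A, μ) be a dg associative algebra (μ a chain map A⊗A → A, associative), and let (H, d_H, i, p, h) be a contraction of A onto H with all side conditions. Define ν := p∘μ∘(i⊗i) : H⊗H → H and m₃ := p∘μ∘((h∘μ)⊗id_A)∘(i⊗i⊗i) − p∘μ∘(id_A⊗(h∘μ))∘(i⊗i⊗i) : H⊗H⊗H → H. Then, with Koszul sign conventions, the associator of ν is exactly the boundary of m₃ in the Hom-complex: ν∘(ν⊗id_H) − ν∘(id_H⊗ν) = d_H∘m₃ + m₃∘d_{H⊗H⊗H}, where d_{H⊗H⊗H} = d_H⊗id⊗id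 + id⊗d_H⊗id + id⊗id⊗d_H (with Koszul signs). -/
open TensorProduct

set_option maxHeartbeats 4000000 in
/-- Arity-3 component of the homotopy transfer theorem for dg associative algebras:
given a dg associative algebra `(A, d_A, μ)` and a contraction of `A` onto `H` (with all
side conditions), the transferred product `ν := p∘μ∘(i⊗i)` is associative up to the
explicit homotopy `m₃ := p∘μ∘((h∘μ)⊗id)∘(i⊗i⊗i) - p∘μ∘(id⊗(h∘μ))∘(i⊗i⊗i)`:
`ν∘(ν⊗id) - ν∘(id⊗ν) = d_H∘m₃ + m₃∘d_{H⊗H⊗H}`.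

The grading is encoded by sign operators `εA, εH` (`ε x = (-1)^{|x|} x`): even maps
commute with `ε`, odd (degree `±1`) maps anticommute with it, and the Koszul sign rule
`(f ⊗ g)(x ⊗ y) = (-1)^{|g||x|} f x ⊗ g y` turns `id ⊗ f` for odd `f` into
`TensorProduct.map ε f`; `d_{H⊗H⊗H} = d⊗id⊗id + id⊗d⊗id + id⊗id⊗d` (Koszul signs). -/
theorem homotopy_transfer_arity_three {R A H : Type} [CommRing R]
    [AddCommGroup A] [Module R A] [AddCommGroup H] [Module R H]
    (dA : A →ₗ[R] A) (dH : H →ₗ[R] H) (εA : A →ₗ[R] A) (εH : H →ₗ[R] H)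
    (i : H →ₗ[R] A) (p : A →ₗ[R] H) (h : A →ₗ[R] A)
    (μ : A ⊗[R] A →ₗ[R] A)
    (hεA : εA ∘ₗ εA = LinearMap.id) (hεH : εH ∘ₗ εH = LinearMap.id)
    (hdA2 : dA ∘ₗ dA = 0) (hdH2 : dH ∘ₗ dH = 0)
    (hdAodd : εA ∘ₗ dA = -(dA ∘ₗ εA)) (hdHodd : εH ∘ₗ dH = -(dH ∘ₗ εH))
    (hhodd : εA ∘ₗ h = -(h ∘ₗ εA))
    (hieven : εA ∘ₗ i = i ∘ₗ εH) (hpeven : εH ∘ₗ p = p ∘ₗ εA)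
    (hichain : dA ∘ₗ i = i ∘ₗ dH) (hpchain : dH ∘ₗ p = p ∘ₗ dA)
    (hpi : p ∘ₗ i = LinearMap.id)
    (hhtp : i ∘ₗ p - LinearMap.id = dA ∘ₗ h + h ∘ₗ dA)
    (hhi : h ∘ₗ i = 0) (hph : p ∘ₗ h = 0) (hhh : h ∘ₗ h = 0)
    (hμeven : εA ∘ₗ μ = μ ∘ₗ TensorProduct.map εA εA)
    (hμchain : dA ∘ₗ μ
      = μ ∘ₗ (TensorProduct.map dA LinearMap.id + TensorProduct.map εA dA))
    (hμassoc : μ ∘ₗ TensorProduct.map μ LinearMap.id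
      = μ ∘ₗ TensorProduct.map LinearMap.id μ ∘ₗ (TensorProduct.assoc R A A A).toLinearMap) :
    let ν : H ⊗[R] H →ₗ[R] H := p ∘ₗ μ ∘ₗ TensorProduct.map i i
    let iii : (H ⊗[R] H) ⊗[R] H →ₗ[R] (A ⊗[R] A) ⊗[R] A :=
      TensorProduct.map (TensorProduct.map i i) i
    let m₃ : (H ⊗[R] H) ⊗[R] H →ₗ[R] H :=
      p ∘ₗ μ ∘ₗ TensorProduct.map (h ∘ₗ μ) LinearMap.id ∘ₗ iii
        - p ∘ₗ μ ∘ₗ TensorProduct.map εA (h ∘ₗ μ)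
            ∘ₗ (TensorProduct.assoc R A A A).toLinearMap ∘ₗ iii
    let d₃ : (H ⊗[R] H) ⊗[R] H →ₗ[R] (H ⊗[R] H) ⊗[R] H :=
      TensorProduct.map (TensorProduct.map dH LinearMap.id) LinearMap.id
        + TensorProduct.map (TensorProduct.map εH dH) LinearMap.id
        + TensorProduct.map (TensorProduct.map εH εH) dH
    ν ∘ₗ TensorProduct.map ν LinearMap.id
        - ν ∘ₗ TensorProduct.map LinearMap.id ν ∘ₗ (TensorProduct.assoc R H H H).toLinearMap
      = dH ∘ₗ m₃ + m₃ ∘ₗ d₃ := by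
  intro ν iii m₃ d₃
  have Hitp : ∀ a : A, i (p a) = a + (dA (h a) + h (dA a)) := by
    intro a
    have := LinearMap.congr_fun hhtp a
    simp only [LinearMap.sub_apply, LinearMap.comp_apply, LinearMap.id_apply,
      LinearMap.add_apply] at this
    rw [sub_eq_iff_eq_add] at this
    rw [this]; abel
  have Hμa : ∀ u v w : A, μ (μ (u ⊗ₜ[R] v) ⊗ₜ[R] w) = μ (u ⊗ₜ[R] μ (v ⊗ₜ[R] w)) := by
    intro u v w
    have := LinearMap.congr_fun hμassoc ((u ⊗ₜ[R] v) ⊗ₜ[R] w)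
    simpa using this
  have Hμc : ∀ u v : A, dA (μ (u ⊗ₜ[R] v)) = μ (dA u ⊗ₜ[R] v) + μ (εA u ⊗ₜ[R] dA v) := by
    intro u v
    have := LinearMap.congr_fun hμchain (u ⊗ₜ[R] v)
    simpa using this
  have Hμe : ∀ u v : A, μ (εA u ⊗ₜ[R] εA v) = εA (μ (u ⊗ₜ[R] v)) := by
    intro u v
    have := LinearMap.congr_fun hμeven (u ⊗ₜ[R] v)
    simpa using this.symm
  have HdHp : ∀ a : A, dH (p a) = p (dA a) := fun a => by
    simpa using LinearMap.congr_fun hpchain a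
  have Hdi : ∀ x : H, i (dH x) = dA (i x) := fun x => by
    simpa using (LinearMap.congr_fun hichain x).symm
  have Hei : ∀ x : H, i (εH x) = εA (i x) := fun x => by
    simpa using (LinearMap.congr_fun hieven x).symm
  have Hεε : ∀ a : A, εA (εA a) = a := fun a => by
    simpa using LinearMap.congr_fun hεA a
  have Hεd : ∀ a : A, εA (dA a) = - dA (εA a) := fun a => by
    simpa using LinearMap.congr_fun hdAodd a
  have Hhε : ∀ a : A, h (εA a) = - εA (h a) := fun a => by
    have := LinearMap.congr_fun hhodd a
    simp only [LinearMap.comp_apply, LinearMap.neg_apply] at this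
    rw [this, neg_neg]
  ext x y z
  try simp only [ν, iii, m₃, d₃, LinearMap.comp_apply, LinearMap.add_apply,
    LinearMap.sub_apply, TensorProduct.map_tmul, LinearMap.id_apply,
    LinearEquiv.coe_coe, TensorProduct.assoc_tmul,
    TensorProduct.AlgebraTensorModule.curry_apply, TensorProduct.curry_apply,
    LinearMap.coe_restrictScalars, map_add, map_sub, map_smul, map_zsmul, map_neg, smul_add, smul_neg]
  try simp only [Hitp, Hdi, Hei, HdHp]
  try simp only [TensorProduct.tmul_add, TensorProduct.add_tmul, map_add]
  try simp only [Hμc, Hμe, Hεε, Hεd, Hhε]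
  try simp only [TensorProduct.tmul_add, TensorProduct.add_tmul, TensorProduct.tmul_neg,
    TensorProduct.neg_tmul, map_add, map_neg, Hμa]
  try simp only [ν, iii, m₃, d₃, LinearMap.comp_apply, LinearMap.add_apply,
    LinearMap.sub_apply, TensorProduct.map_tmul, LinearMap.id_apply,
    LinearEquiv.coe_coe, TensorProduct.assoc_tmul,
    TensorProduct.AlgebraTensorModule.curry_apply, TensorProduct.curry_apply,
    LinearMap.coe_restrictScalars, map_add, map_sub, map_smul, map_zsmul, map_neg, smul_add, smul_neg]
  try simp only [Hitp, Hdi, Hei, HdHp]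
  try simp only [TensorProduct.tmul_add, TensorProduct.add_tmul, map_add]
  try simp only [Hμc, Hμe, Hεε, Hεd, Hhε]
  try simp only [TensorProduct.tmul_add, TensorProduct.add_tmul, TensorProduct.tmul_neg,
    TensorProduct.neg_tmul, map_add, map_neg, Hμa]
  try simp only [ν, iii, m₃, d₃, LinearMap.comp_apply, LinearMap.add_apply,
    LinearMap.sub_apply, TensorProduct.map_tmul, LinearMap.id_apply,
    LinearEquiv.coe_coe, TensorProduct.assoc_tmul,
    TensorProduct.AlgebraTensorModule.curry_apply, TensorProduct.curry_apply,
    LinearMap.coe_restrictScalars, map_add, map_sub, map_smul, map_zsmul, map_neg, smul_add, smul_neg]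
  try simp only [Hitp, Hdi, Hei, HdHp]
  try simp only [TensorProduct.tmul_add, TensorProduct.add_tmul, map_add]
  try simp only [Hμc, Hμe, Hεε, Hεd, Hhε]
  try simp only [TensorProduct.tmul_add, TensorProduct.add_tmul, TensorProduct.tmul_neg,
    TensorProduct.neg_tmul, map_add, map_neg, Hμa]
  abel
end
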